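/- There is an absolute constant C such that the following holds. Let P be a trigonometric polynomial, ℓ ≥ 1 an integer, I ⊂ ℝ/ℤ an interval with |I| ≥ 1/ℓ, and k ≥ 0 an integer. Then ∫_I |P(θ)| · |∑_{j=0}^k e(jℓθ)| dθ ≤ C log(2+k) · ∫_I max_{|ψ| ≤ 1/ℓ} |P(θ+ψ)| dθ. -/

import Mathlib

/-!
Write `D_k(u) = |∑_{j ≤ k} e(ju)|` and `M` for the maximal function at scale `1/ℓ`. Cut `I` into
pieces `J` of length between `1/(2ℓ)` and `1/ℓ`. Any two points of `J` are within `1/ℓ` of each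
other, so `|P(θ)| ≤ M(θ')` for `θ, θ' ∈ J`; averaging over `θ'` gives
`∫_J |P| D_k(ℓ·) ≤ |J|⁻¹ ∫_J D_k(ℓ·) · ∫_J M ≤ 2 ∫_0^1 D_k · ∫_J M`, because `ℓ |J| ≤ 1` and `D_k`
is nonnegative and 1-periodic. Finally `∫_0^1 D_k ≤ 1 + log (k + 1)` follows from
`D_k(u) ≤ min (k + 1, 1 / (2|u|))` on `[-1/2, 1/2]`.
-/

open Finset intervalIntegral

noncomputable def e (θ : ℝ) : ℂ := Complex.exp (2 * Real.pi * Complex.I * θ)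

open Set Function Real

lemma e_eq_exp_I_mul (θ : ℝ) : e θ = Complex.exp (Complex.I * (2 * π * θ : ℝ)) := by
  rw [e]; push_cast; ring_nf

@[fun_prop]
lemma continuous_e : Continuous e := by
  unfold e; fun_prop

lemma norm_e (θ : ℝ) : ‖e θ‖ = 1 := by
  rw [e_eq_exp_I_mul, Complex.norm_exp_I_mul_ofReal]

lemma e_natCast_mul (j : ℕ) (θ : ℝ) : e (j * θ) = e θ ^ j := by
  rw [e, e, ← Complex.exp_nat_mul]; push_cast; ring_nf

lemma e_neg (θ : ℝ) : e (-θ) = starRingEnd ℂ (e θ) := by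
  rw [e, e, ← Complex.exp_conj]; simp [map_ofNat]

lemma e_periodic : Periodic e 1 := by
  intro θ
  rw [e, e, ← Complex.exp_periodic (2 * π * Complex.I * θ)]
  push_cast; ring_nf

lemma four_mul_le_norm_e_sub_one {u : ℝ} (h0 : 0 ≤ u) (h1 : u ≤ 1 / 2) : 4 * u ≤ ‖e u - 1‖ := by
  have hsin : 2 * u ≤ sin (π * u) := by
    have := mul_le_sin (x := π * u) (by positivity) (by nlinarith [pi_pos])
    rwa [← mul_assoc, div_mul_cancel₀ _ pi_ne_zero] at this
  rw [e_eq_exp_I_mul, Complex.norm_exp_I_mul_ofReal_sub_one, show 2 * π * u / 2 = π * u by ring,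
    Real.norm_eq_abs, abs_of_nonneg (by linarith)]
  linarith

section Dirichlet

noncomputable def dirichletNorm (k : ℕ) (u : ℝ) : ℝ := ‖∑ j ∈ range (k + 1), e (j * u)‖

variable (k : ℕ)

lemma dirichletNorm_eq_norm_geom_sum (u : ℝ) :
    dirichletNorm k u = ‖∑ j ∈ range (k + 1), e u ^ j‖ := by
  simp only [dirichletNorm, e_natCast_mul]

lemma continuous_dirichletNorm : Continuous (dirichletNorm k) := by
  unfold dirichletNorm; fun_prop

lemma dirichletNorm_nonneg (u : ℝ) : 0 ≤ dirichletNorm k u := norm_nonneg _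

lemma dirichletNorm_periodic : Periodic (dirichletNorm k) 1 := by
  intro u
  simp only [dirichletNorm_eq_norm_geom_sum, e_periodic u]

lemma dirichletNorm_neg (u : ℝ) : dirichletNorm k (-u) = dirichletNorm k u := by
  simp only [dirichletNorm_eq_norm_geom_sum, e_neg, ← map_pow, ← map_sum, Complex.norm_conj]

lemma dirichletNorm_le_succ (u : ℝ) : dirichletNorm k u ≤ k + 1 := by
  rw [dirichletNorm_eq_norm_geom_sum]
  refine (norm_sum_le _ _).trans ?_
  simp [norm_e]

lemma dirichletNorm_le_inv {u : ℝ} (h0 : 0 < u) (h1 : u ≤ 1 / 2) :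
    dirichletNorm k u ≤ (2 * u)⁻¹ := by
  have hsep := four_mul_le_norm_e_sub_one h0.le h1
  have hne : e u ≠ 1 := by
    intro h; rw [h, sub_self, norm_zero] at hsep; linarith
  have hnum : ‖e u ^ (k + 1) - 1‖ ≤ 2 :=
    (norm_sub_le _ _).trans (by simp [norm_e]; norm_num)
  rw [dirichletNorm_eq_norm_geom_sum, geom_sum_eq hne, norm_div]
  calc ‖e u ^ (k + 1) - 1‖ / ‖e u - 1‖ ≤ 2 / (4 * u) :=
        div_le_div₀ (by norm_num) hnum (by positivity) hsep
    _ = (2 * u)⁻¹ := by field_simp; ring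

lemma integral_dirichletNorm_eq_two_mul :
    ∫ u in (0 : ℝ)..1, dirichletNorm k u = 2 * ∫ u in (0 : ℝ)..1 / 2, dirichletNorm k u := by
  have hint : ∀ a b : ℝ, IntervalIntegrable (dirichletNorm k) MeasureTheory.volume a b :=
    (continuous_dirichletNorm k).intervalIntegrable
  have hper := (dirichletNorm_periodic k).intervalIntegral_add_eq (-(1 / 2)) 0
  have hneg : ∫ u in -(1 / 2)..0, dirichletNorm k u = ∫ u in (0 : ℝ)..1 / 2, dirichletNorm k u := by
    simpa [dirichletNorm_neg] using integral_comp_neg (a := -(1 / 2)) (b := 0) (dirichletNorm k)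
  rw [zero_add, show -(1 / 2) + 1 = (1 / 2 : ℝ) by norm_num] at hper
  rw [← hper, ← integral_add_adjacent_intervals (hint _ 0) (hint 0 _), hneg]
  ring

lemma integral_dirichletNorm_le : ∫ u in (0 : ℝ)..1, dirichletNorm k u ≤ 1 + log (k + 1) := by
  have hint : ∀ a b : ℝ, IntervalIntegrable (dirichletNorm k) MeasureTheory.volume a b :=
    (continuous_dirichletNorm k).intervalIntegrable
  -- `a` is where the bounds `k + 1` and `1 / (2u)` cross.
  set a : ℝ := (2 * (k + 1))⁻¹ with ha
  have ha0 : 0 < a := by positivity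
  have ha1 : a ≤ 1 / 2 := by
    rw [ha, one_div]; gcongr; linarith [(k.cast_nonneg : (0 : ℝ) ≤ k)]
  have hnear : ∫ u in (0 : ℝ)..a, dirichletNorm k u ≤ 1 / 2 := by
    calc ∫ u in (0 : ℝ)..a, dirichletNorm k u ≤ ∫ _ in (0 : ℝ)..a, ((k : ℝ) + 1) :=
          integral_mono_on ha0.le (hint _ _) intervalIntegrable_const
            fun u _ => dirichletNorm_le_succ k u
      _ = 1 / 2 := by rw [integral_const, smul_eq_mul, ha]; field_simp; ring
  have hinv : IntervalIntegrable (fun u : ℝ => 2⁻¹ * u⁻¹) MeasureTheory.volume a (1 / 2) :=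
    (intervalIntegrable_inv_iff.2 <| Or.inr fun h0 => by
      rw [uIcc_of_le ha1] at h0; linarith [h0.1]).const_mul _
  have hfar : ∫ u in a..1 / 2, dirichletNorm k u ≤ 1 / 2 * log (k + 1) := by
    calc ∫ u in a..1 / 2, dirichletNorm k u ≤ ∫ u in a..1 / 2, 2⁻¹ * u⁻¹ :=
          integral_mono_on ha1 (hint _ _) hinv
            fun u hu => (dirichletNorm_le_inv k (ha0.trans_le hu.1) hu.2).trans_eq (mul_inv _ _)
      _ = 1 / 2 * log (k + 1) := by
          rw [integral_const_mul, integral_inv_of_pos ha0 (by norm_num), ha, div_inv_eq_mul,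
            one_div]
          congr 2; ring
  rw [integral_dirichletNorm_eq_two_mul, ← integral_add_adjacent_intervals (hint 0 a) (hint a _)]
  linarith

end Dirichlet

section LocalMax

variable {E : Type*} [SeminormedAddCommGroup E] {f : ℝ → E} {r : ℝ}

noncomputable def localMax (f : ℝ → E) (r θ : ℝ) : ℝ := ⨆ ψ : Icc (-r) r, ‖f (θ + ψ)‖

lemma norm_le_localMax (hf : Continuous f) {θ ψ : ℝ} (hψ : ψ ∈ Icc (-r) r) :
    ‖f (θ + ψ)‖ ≤ localMax f r θ := by
  have hbdd := isCompact_Icc.bddAbove_image (f := fun ψ => ‖f (θ + ψ)‖) (K := Icc (-r) r)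
    (by fun_prop)
  rw [image_eq_range] at hbdd
  exact le_ciSup hbdd ⟨ψ, hψ⟩

lemma localMax_nonneg (hf : Continuous f) (hr : 0 ≤ r) (θ : ℝ) : 0 ≤ localMax f r θ :=
  (norm_nonneg _).trans (norm_le_localMax hf (θ := θ) (ψ := 0) ⟨by linarith, hr⟩)

lemma continuous_localMax (hf : Continuous f) : Continuous (localMax f r) := by
  have := isCompact_Icc.continuous_sSup (f := fun θ ψ => ‖f (θ + ψ)‖) (K := Icc (-r) r)
    (by fun_prop)
  simp only [sSup_image'] at this
  exact this

end LocalMax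

lemma sub_mul_integral_mul_le {f w M : ℝ → ℝ} {a b : ℝ} (hab : a ≤ b) (hf : Continuous f)
    (hw : Continuous w) (hM : Continuous M) (hw0 : ∀ x, 0 ≤ w x)
    (hfM : ∀ x ∈ Icc a b, ∀ y ∈ Icc a b, f x ≤ M y) :
    (b - a) * ∫ x in a..b, f x * w x ≤ (∫ x in a..b, w x) * ∫ y in a..b, M y := by
  have hpt : ∀ y ∈ Icc a b, ∫ x in a..b, f x * w x ≤ M y * ∫ x in a..b, w x := fun y hy => by
    rw [← integral_const_mul]
    exact integral_mono_on hab ((hf.mul hw).intervalIntegrable _ _)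
      ((hw.const_smul (M y)).intervalIntegrable _ _)
      fun x hx => mul_le_mul_of_nonneg_right (hfM x hx y hy) (hw0 x)
  calc (b - a) * ∫ x in a..b, f x * w x = ∫ _ in a..b, ∫ x in a..b, f x * w x := by
        rw [integral_const, smul_eq_mul]
    _ ≤ ∫ y in a..b, M y * ∫ x in a..b, w x :=
        integral_mono_on hab intervalIntegrable_const
          ((hM.mul continuous_const).intervalIntegrable _ _) hpt
    _ = (∫ x in a..b, w x) * ∫ y in a..b, M y := by rw [integral_mul_const, mul_comm]

lemma integral_comp_mul_le_of_periodic {w : ℝ → ℝ} (hw : Continuous w) (hper : Periodic w 1)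
    (hw0 : ∀ x, 0 ≤ w x) {ℓ a h : ℝ} (hℓ : 0 < ℓ) (h0 : 0 ≤ h) (hℓh : ℓ * h ≤ 1) :
    ∫ x in a..a + h, w (ℓ * x) ≤ (∫ x in (0 : ℝ)..1, w x) / ℓ := by
  rw [integral_comp_mul_left w hℓ.ne', smul_eq_mul, inv_mul_eq_div]
  gcongr
  calc ∫ x in ℓ * a..ℓ * (a + h), w x ≤ ∫ x in ℓ * a..ℓ * a + 1, w x :=
        integral_mono_interval le_rfl (by nlinarith) (by nlinarith)
          (Filter.Eventually.of_forall hw0) (hw.intervalIntegrable _ _)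
    _ = ∫ x in (0 : ℝ)..0 + 1, w x := hper.intervalIntegral_add_eq _ _
    _ = ∫ x in (0 : ℝ)..1, w x := by rw [zero_add]

lemma integral_le_mul_integral_of_forall_short {F G : ℝ → ℝ} (hF : Continuous F)
    (hG : Continuous G) {c r δ : ℝ} (hr : 0 < r) (hrδ : r ≤ δ)
    (hshort : ∀ a h, r / 2 ≤ h → h ≤ r → ∫ x in a..a + h, F x ≤ c * ∫ x in a..a + h, G x)
    (t : ℝ) : ∫ x in t..t + δ, F x ≤ c * ∫ x in t..t + δ, G x := by
  set n := ⌈δ / r⌉₊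
  have hδr : 1 ≤ δ / r := (one_le_div hr).2 hrδ
  have hn : δ / r ≤ n := Nat.le_ceil _
  have hn' : (n : ℝ) < δ / r + 1 := Nat.ceil_lt_add_one (by positivity)
  have hn0 : 0 < (n : ℝ) := by linarith
  set a : ℕ → ℝ := fun i => t + i * (δ / n)
  have hstep : ∀ i, a (i + 1) = a i + δ / n := by intro i; simp only [a]; push_cast; ring
  have ha0 : a 0 = t := by simp [a]
  have han : a n = t + δ := by simp only [a]; field_simp
  have hpiece : ∀ i, ∫ x in a i..a (i + 1), F x ≤ c * ∫ x in a i..a (i + 1), G x := by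
    intro i
    rw [hstep]
    apply hshort
    · rw [div_le_div_iff₀ (by norm_num) hn0]
      rw [le_div_iff₀ hr] at hδr
      nlinarith [(lt_div_iff₀ hr).1 (show (n : ℝ) - 1 < δ / r by linarith)]
    · rw [div_le_iff₀ hn0]; rwa [div_le_iff₀ hr, mul_comm] at hn
  calc ∫ x in t..t + δ, F x = ∑ i ∈ range n, ∫ x in a i..a (i + 1), F x := by
        rw [sum_integral_adjacent_intervals fun i _ => hF.intervalIntegrable _ _, ha0, han]
    _ ≤ ∑ i ∈ range n, c * ∫ x in a i..a (i + 1), G x := sum_le_sum fun i _ => hpiece i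
    _ = c * ∫ x in t..t + δ, G x := by
        rw [← mul_sum, sum_integral_adjacent_intervals fun i _ => hG.intervalIntegrable _ _,
          ha0, han]

theorem integral_norm_mul_periodic_le_localMax {E : Type*} [SeminormedAddCommGroup E]
    {f : ℝ → E} (hf : Continuous f) {w : ℝ → ℝ} (hw : Continuous w) (hper : Periodic w 1)
    (hw0 : ∀ x, 0 ≤ w x) {A : ℝ} (hA : ∫ u in (0 : ℝ)..1, w u ≤ A) {ℓ δ : ℝ} (hℓ : 0 < ℓ)
    (hδ : 1 / ℓ ≤ δ) (t : ℝ) :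
    ∫ θ in t..t + δ, ‖f θ‖ * w (ℓ * θ) ≤ 2 * A * ∫ θ in t..t + δ, localMax f (1 / ℓ) θ := by
  refine integral_le_mul_integral_of_forall_short (by fun_prop) (continuous_localMax hf)
    (by positivity) hδ (fun a h hh1 hh2 => ?_) t
  have hh0 : 0 < h := lt_of_lt_of_le (by positivity) hh1
  have hnear : ∀ x ∈ Icc a (a + h), ∀ y ∈ Icc a (a + h), ‖f x‖ ≤ localMax f (1 / ℓ) y :=
    fun x hx y hy => by
      have := norm_le_localMax hf (r := 1 / ℓ) (θ := y) (ψ := x - y)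
        ⟨by linarith [hx.1, hy.2], by linarith [hx.2, hy.1]⟩
      rwa [add_sub_cancel] at this
  have havg := sub_mul_integral_mul_le (w := fun θ => w (ℓ * θ)) (by linarith) hf.norm
    (by fun_prop) (continuous_localMax hf) (fun x => hw0 _) hnear
  have hwin := integral_comp_mul_le_of_periodic hw hper hw0 (a := a) hℓ hh0.le
    (by rwa [← le_div_iff₀' hℓ])
  have hX : 0 ≤ ∫ θ in a..a + h, ‖f θ‖ * w (ℓ * θ) :=
    integral_nonneg (by linarith) fun _ _ => mul_nonneg (norm_nonneg _) (hw0 _)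
  have hM : 0 ≤ ∫ θ in a..a + h, localMax f (1 / ℓ) θ :=
    integral_nonneg (by linarith) fun _ _ => localMax_nonneg hf (by positivity) _
  have h2ℓh : 1 ≤ 2 * ℓ * h := by
    rw [div_div, div_le_iff₀ (by positivity)] at hh1; linarith
  rw [add_sub_cancel_left] at havg
  calc ∫ θ in a..a + h, ‖f θ‖ * w (ℓ * θ)
      ≤ 2 * ℓ * (h * ∫ θ in a..a + h, ‖f θ‖ * w (ℓ * θ)) := by nlinarith
    _ ≤ 2 * ℓ * ((A / ℓ) * ∫ θ in a..a + h, localMax f (1 / ℓ) θ) := by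
        gcongr 2 * ℓ * ?_
        exact havg.trans (mul_le_mul_of_nonneg_right (hwin.trans (by gcongr)) hM)
    _ = 2 * A * ∫ θ in a..a + h, localMax f (1 / ℓ) θ := by field_simp

/-- Estimate (2.7) in the proof of Lemma 3: for any trigonometric polynomial `P`,
integer `ℓ ≥ 1` and interval `I` with `|I| ≥ 1/ℓ`,
`∫_I |P(θ)| |∑_{j=0}^k e(jℓθ)| dθ ≤ C log(2+k) ∫_I max_{|ψ|≤1/ℓ} |P(θ+ψ)| dθ`. -/
theorem stmt_8 : ∃ C : ℝ, 0 < C ∧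
    ∀ (s : Finset ℤ) (cf : ℤ → ℂ) (ℓ : ℕ) (t δ : ℝ) (k : ℕ),
      1 ≤ ℓ → 1 / (ℓ : ℝ) ≤ δ →
      (∫ θ in t..(t + δ),
          ‖∑ m ∈ s, cf m * e (m * θ)‖ *
            ‖∑ j ∈ Finset.range (k + 1), e (j * ℓ * θ)‖) ≤
        C * Real.log (2 + k) *
          ∫ θ in t..(t + δ),
            ⨆ ψ : Set.Icc (-(1 / (ℓ : ℝ))) (1 / (ℓ : ℝ)),
              ‖∑ m ∈ s, cf m * e (m * (θ + (ψ : ℝ)))‖ := by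
  refine ⟨6, by norm_num, fun s cf ℓ t δ k hℓ hδ => ?_⟩
  have hlog : 1 + log (k + 1) ≤ 3 * log (2 + k) := by
    have h2 : log 2 ≤ log (2 + k) := log_le_log (by norm_num) (by simp)
    have h3 : log (k + 1) ≤ log (2 + k) := log_le_log (by positivity) (by linarith)
    linarith [log_two_gt_d9]
  have key := integral_norm_mul_periodic_le_localMax (f := fun θ : ℝ => ∑ m ∈ s, cf m * e (m * θ))
    (by fun_prop) (continuous_dirichletNorm k) (dirichletNorm_periodic k) (dirichletNorm_nonneg k)
    ((integral_dirichletNorm_le k).trans hlog) (by exact_mod_cast hℓ) hδ t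
  simp only [dirichletNorm, localMax, ← mul_assoc] at key
  convert key using 2
  norm_num
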